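/- arXiv:math/0305028 — 4 statements merged into one kernel-verified Lean document; each statement's English description precedes it below -/
import Mathlib

section
/- Let G be a finite group acting on a finite set X, and let H be a subgroup of G. Then the number of H-orbits of X equals (G : H) times the number of G-orbits of X if and only if for every x ∈ X the stabilizer of x in H equals the stabilizer of x in G, i.e. H_x = G_x for all x ∈ X (equivalently, G_x ⊆ H for all x ∈ X). -/
/-!
Burnside's lemma in the form `∑ x, |G_x| = |G| · #(X/G)`, applied to `G` and to `H`, gives
`|H| · #(X/H) = ∑ x, |H_x| ≤ ∑ x, |G_x| = |G| · #(X/G) = |H| · (G : H) · #(X/G)`,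
since `H_x = H ∩ G_x` embeds in `G_x`. Hence equality holds iff `|H_x| = |G_x|` for every `x`,
that is, iff `H_x = G_x` for every `x`.
-/

namespace MulAction

variable {G X : Type*} [Group G] [MulAction G X]

theorem map_subtype_stabilizer (H : Subgroup G) (x : X) :
    (stabilizer H x).map H.subtype = H ⊓ stabilizer G x := by
  rw [show stabilizer H x = (stabilizer G x).comap H.subtype from rfl, Subgroup.map_comap_eq,
    Subgroup.range_subtype]

theorem map_subtype_stabilizer_le (H : Subgroup G) (x : X) :
    (stabilizer H x).map H.subtype ≤ stabilizer G x :=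
  map_subtype_stabilizer H x ▸ inf_le_right

theorem card_stabilizer_subgroup_le [Finite G] (H : Subgroup G) (x : X) :
    Nat.card (stabilizer H x) ≤ Nat.card (stabilizer G x) := by
  rw [← Subgroup.card_map_of_injective H.subtype_injective]
  exact Subgroup.card_le_of_le (map_subtype_stabilizer_le H x)

theorem map_subtype_stabilizer_eq_iff_card_eq [Finite G] (H : Subgroup G) (x : X) :
    (stabilizer H x).map H.subtype = stabilizer G x ↔
      Nat.card (stabilizer H x) = Nat.card (stabilizer G x) := by
  rw [← Subgroup.card_map_of_injective H.subtype_injective (K := stabilizer H x)]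
  exact ⟨fun h ↦ h ▸ rfl,
    fun h ↦ Subgroup.eq_of_le_of_card_ge (map_subtype_stabilizer_le H x) h.ge⟩

variable (G X) in
theorem sum_card_stabilizer_eq_card_orbits_mul_card_group [Finite G] [Fintype X] :
    ∑ x : X, Nat.card (stabilizer G x) = Nat.card (orbitRel.Quotient G X) * Nat.card G := by
  rw [← Nat.card_sigma, ← Nat.card_prod]
  refine Nat.card_congr <| .trans ?_ (sigmaFixedByEquivOrbitsProdGroup G X)
  calc (Σ x : X, stabilizer G x) ≃ { p : X × G // p.2 • p.1 = p.1 } :=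
        (Equiv.subtypeProdEquivSigmaSubtype fun (x : X) g ↦ g ∈ stabilizer G x).symm
    _ ≃ { p : G × X // p.1 • p.2 = p.2 } := (Equiv.prodComm X G).subtypeEquiv fun _ ↦ Iff.rfl
    _ ≃ Σ g : G, fixedBy X g := Equiv.subtypeProdEquivSigmaSubtype fun g (x : X) ↦ g • x = x

end MulAction

open MulAction

/-- If a finite group `G` acts on a finite set `X` and `H ≤ G`, then the number of
`H`-orbits of `X` equals `(G : H)` times the number of `G`-orbits of `X` if and only if
for every `x ∈ X` the stabilizer of `x` in `H` equals the stabilizer of `x` in `G`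
(the former viewed as a subgroup of `G` via the inclusion `H ↪ G`). -/
theorem card_H_orbits_eq_index_mul_card_G_orbits_iff
    (G X : Type*) [Group G] [Finite G] [Finite X] [MulAction G X] (H : Subgroup G) :
    Nat.card (MulAction.orbitRel.Quotient H X) =
        H.index * Nat.card (MulAction.orbitRel.Quotient G X) ↔
      ∀ x : X, (MulAction.stabilizer H x).map H.subtype = MulAction.stabilizer G x := by
  cases nonempty_fintype X
  calc Nat.card (orbitRel.Quotient H X) = H.index * Nat.card (orbitRel.Quotient G X)
      ↔ Nat.card (orbitRel.Quotient H X) * Nat.card H =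
          Nat.card (orbitRel.Quotient G X) * Nat.card G := by
        rw [← H.index_mul_card, ← mul_assoc, Nat.mul_left_inj Nat.card_pos.ne',
          mul_comm H.index]
    _ ↔ ∑ x : X, Nat.card (stabilizer H x) = ∑ x : X, Nat.card (stabilizer G x) := by
        rw [sum_card_stabilizer_eq_card_orbits_mul_card_group,
          sum_card_stabilizer_eq_card_orbits_mul_card_group]
    _ ↔ ∀ x : X, (stabilizer H x).map H.subtype = stabilizer G x := by
        simp only [Finset.sum_eq_sum_iff_of_le fun x _ ↦ card_stabilizer_subgroup_le H x,
          Finset.mem_univ, true_imp_iff, map_subtype_stabilizer_eq_iff_card_eq]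
end

section
/- Let n ≥ 1 and r ≥ 1 be integers. Then the natural action of the general linear group GL_r(ℤ/nℤ) on (ℤ/nℤ)^r (by matrix-vector multiplication) has exactly d(n) distinct orbits, where d(n) is the number of positive divisors of n. -/
/-- The orbit of a vector `v ∈ (ℤ/nℤ)^r` under the natural action of `GL_r(ℤ/nℤ)`
by matrix-vector multiplication. -/
def glOrbit (n r : ℕ) (v : Fin r → ZMod n) : Set (Fin r → ZMod n) :=
  {w | ∃ A : GL (Fin r) (ZMod n), (A : Matrix (Fin r) (Fin r) (ZMod n)).mulVec v = w}

/-!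
Acting on two coordinates by `!![x, y; -b', a']`, where `(a, b) = d • (a', b')` and
`x * a' + y * b' = 1` (such a factorization exists in `ℤ`, hence in `ℤ/nℤ`), turns `(a, b)` into
`(d, 0)`; so every orbit contains a vector `c • e₀`, and even `d • e₀` with `d ∣ n` after
writing `c = u * d` with `u` a unit. Any automorphism maps `d • e₀` to a vector whose
coordinates are multiples of `d`, so `d` is determined by the orbit.
-/

open MulAction

/-- Kaplansky's Hermite condition: every pair of elements is a multiple of a coprime pair. -/
def IsHermiteRing (R : Type*) [CommRing R] : Prop :=
  ∀ a b : R, ∃ d a' b', a = d * a' ∧ b = d * b' ∧ IsCoprime a' b'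

theorem IsHermiteRing.of_surjective {R S : Type*} [CommRing R] [CommRing S] (hR : IsHermiteRing R)
    (f : R →+* S) (hf : Function.Surjective f) : IsHermiteRing S := by
  intro a b
  obtain ⟨a, rfl⟩ := hf a
  obtain ⟨b, rfl⟩ := hf b
  obtain ⟨d, a', b', rfl, rfl, hab⟩ := hR a b
  exact ⟨f d, f a', f b', map_mul f d a', map_mul f d b', hab.map f⟩

theorem isHermiteRing_of_isBezout {R : Type*} [CommRing R] [IsDomain R] [IsBezout R]
    [GCDMonoid R] : IsHermiteRing R := by
  intro a b
  obtain ⟨a', b', ha, hb, hu⟩ := extract_gcd a b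
  exact ⟨gcd a b, a', b', ha, hb, (gcd_isUnit_iff a' b').1 hu⟩

theorem ZMod.isHermiteRing (n : ℕ) : IsHermiteRing (ZMod n) :=
  isHermiteRing_of_isBezout.of_surjective (Int.castRingHom (ZMod n)) ZMod.intCast_surjective

section HermiteReduction

variable {R ι : Type*} [CommRing R] [DecidableEq ι]

def LinearEquiv.pairCoord (i k : ι) (hik : i ≠ k) (x y s t : R) (h : x * t - y * s = 1) :
    (ι → R) ≃ₗ[R] (ι → R) where
  toFun w j := if j = i then x * w i + y * w k else if j = k then s * w i + t * w k else w j
  invFun w j := if j = i then t * w i - y * w k else if j = k then x * w k - s * w i else w j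
  map_add' w w' := by funext j; simp only [Pi.add_apply]; split_ifs <;> ring
  map_smul' c w := by
    funext j; simp only [Pi.smul_apply, smul_eq_mul, RingHom.id_apply]; split_ifs <;> ring
  left_inv w := by
    funext j
    rcases eq_or_ne j i with rfl | hji
    · simp only [if_pos, if_neg hik.symm]; linear_combination w j * h
    rcases eq_or_ne j k with rfl | hjk
    · simp only [if_pos, if_neg hik.symm]; linear_combination w j * h
    · simp only [if_neg hji, if_neg hjk]
  right_inv w := by
    funext j
    rcases eq_or_ne j i with rfl | hji
    · simp only [if_pos, if_neg hik.symm]; linear_combination w j * h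
    rcases eq_or_ne j k with rfl | hjk
    · simp only [if_pos, if_neg hik.symm]; linear_combination w j * h
    · simp only [if_neg hji, if_neg hjk]

theorem IsHermiteRing.exists_linearEquiv_apply_eq_zero (hR : IsHermiteRing R) {i k : ι}
    (hik : i ≠ k) (v : ι → R) :
    ∃ e : (ι → R) ≃ₗ[R] (ι → R), e v k = 0 ∧ ∀ j, j ≠ i → j ≠ k → e v j = v j := by
  obtain ⟨d, a, b, ha, hb, x, y, hxy⟩ := hR (v i) (v k)
  refine ⟨LinearEquiv.pairCoord i k hik x y (-b) a (by linear_combination hxy), ?_, ?_⟩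
  · change (if k = i then _ else if k = k then -b * v i + a * v k else _) = 0
    rw [if_neg hik.symm, if_pos rfl, ha, hb]
    ring
  · intro j hji hjk
    change (if j = i then _ else if j = k then _ else v j) = v j
    rw [if_neg hji, if_neg hjk]

theorem IsHermiteRing.exists_linearEquiv_apply_eq_zero_of_mem (hR : IsHermiteRing R) {i : ι}
    (v : ι → R) (s : Finset ι) (hi : i ∉ s) : ∃ e : (ι → R) ≃ₗ[R] (ι → R), ∀ j ∈ s, e v j = 0 := by
  induction s using Finset.induction_on with
  | empty => exact ⟨1, by simp⟩
  | insert k s hks ih =>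
    obtain ⟨e, he⟩ := ih fun h => hi (Finset.mem_insert_of_mem h)
    have hik : i ≠ k := fun h => hi (h ▸ Finset.mem_insert_self i s)
    obtain ⟨f, hfk, hf⟩ := hR.exists_linearEquiv_apply_eq_zero hik (e v)
    refine ⟨e.trans f, fun j hj => ?_⟩
    rcases Finset.mem_insert.1 hj with rfl | hj
    · exact hfk
    · have hji : j ≠ i := fun h => hi (Finset.mem_insert_of_mem (h ▸ hj))
      rw [LinearEquiv.trans_apply, hf j hji (fun h => hks (h ▸ hj)), he j hj]

theorem IsHermiteRing.exists_single_mem_orbit [Fintype ι] (hR : IsHermiteRing R) (i : ι)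
    (v : ι → R) : ∃ c, (Pi.single i c : ι → R) ∈ orbit ((ι → R) ≃ₗ[R] (ι → R)) v := by
  obtain ⟨e, he⟩ :=
    hR.exists_linearEquiv_apply_eq_zero_of_mem v _ (Finset.notMem_erase i Finset.univ)
  refine ⟨e v i, mem_orbit_iff.2 ⟨e, funext fun j => ?_⟩⟩
  rcases eq_or_ne j i with rfl | hji
  · simp [LinearEquiv.smul_def]
  · simp [LinearEquiv.smul_def, hji, he j]

theorem dvd_of_single_mem_orbit_single {i : ι} {a b : R}
    (h : (Pi.single i a : ι → R) ∈ orbit ((ι → R) ≃ₗ[R] (ι → R)) (Pi.single i b : ι → R)) :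
    b ∣ a := by
  obtain ⟨e, he⟩ := mem_orbit_iff.1 h
  rw [LinearEquiv.smul_def] at he
  refine ⟨e (Pi.single i 1) i, ?_⟩
  calc a = e (Pi.single i b) i := by rw [he, Pi.single_eq_same]
    _ = e (b • Pi.single i 1) i := by rw [← Pi.single_smul', smul_eq_mul, mul_one]
    _ = b * e (Pi.single i 1) i := by rw [map_smul]; rfl

theorem orbit_single_eq_of_associated {i : ι} {a b : R} (h : Associated a b) :
    orbit ((ι → R) ≃ₗ[R] (ι → R)) (Pi.single i a : ι → R) =
      orbit ((ι → R) ≃ₗ[R] (ι → R)) (Pi.single i b : ι → R) := by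
  obtain ⟨u, rfl⟩ := h
  refine (orbit_eq_iff.2 (mem_orbit_iff.2 ⟨LinearEquiv.smulOfUnit u, ?_⟩)).symm
  change u • (Pi.single i a : ι → R) = _
  rw [← Pi.single_smul', Units.smul_def, smul_eq_mul, mul_comm]

end HermiteReduction

theorem ZMod.dvd_of_natCast_dvd_natCast {n a b : ℕ} (ha : a ∣ n) (h : (a : ZMod n) ∣ b) :
    a ∣ b := by
  obtain ⟨c, hc⟩ := h
  have := congrArg (ZMod.castHom ha (ZMod a)) hc
  rwa [map_natCast, map_mul, map_natCast, ZMod.natCast_self, zero_mul,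
    ZMod.natCast_eq_zero_iff] at this

theorem glOrbit_eq_orbit (n r : ℕ) (v : Fin r → ZMod n) :
    glOrbit n r v = orbit ((Fin r → ZMod n) ≃ₗ[ZMod n] (Fin r → ZMod n)) v := by
  let φ := Matrix.GeneralLinearGroup.toLin.trans
    (LinearMap.GeneralLinearGroup.generalLinearEquiv (ZMod n) (Fin r → ZMod n))
  ext w
  rw [mem_orbit_iff, φ.surjective.exists]
  rfl

theorem eq_of_glOrbit_single_eq {n r d₁ d₂ : ℕ} {i : Fin r} (h₁ : d₁ ∣ n) (h₂ : d₂ ∣ n)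
    (h : glOrbit n r (Pi.single i (d₁ : ZMod n)) = glOrbit n r (Pi.single i (d₂ : ZMod n))) :
    d₁ = d₂ := by
  rw [glOrbit_eq_orbit, glOrbit_eq_orbit] at h
  have h₂₁ := dvd_of_single_mem_orbit_single (h ▸ mem_orbit_self _)
  have h₁₂ := dvd_of_single_mem_orbit_single (h.symm ▸ mem_orbit_self _)
  exact Nat.dvd_antisymm (ZMod.dvd_of_natCast_dvd_natCast h₁ h₁₂)
    (ZMod.dvd_of_natCast_dvd_natCast h₂ h₂₁)

theorem exists_dvd_glOrbit_eq_single (n : ℕ) {r : ℕ} (i : Fin r) (v : Fin r → ZMod n) :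
    ∃ d, d ∣ n ∧ glOrbit n r v = glOrbit n r (Pi.single i (d : ZMod n)) := by
  obtain ⟨c, hc⟩ := (ZMod.isHermiteRing n).exists_single_mem_orbit i v
  obtain ⟨d, hd, u, hu, rfl⟩ := ZMod.eq_unit_mul_divisor c
  refine ⟨d, hd, ?_⟩
  rw [glOrbit_eq_orbit, glOrbit_eq_orbit, ← orbit_eq_iff.2 hc]
  exact orbit_single_eq_of_associated (associated_unit_mul_left _ u hu)

/-- For `n = 0` both sides are `0`: `Nat.card` of an infinite type is `0`. -/
theorem Nat.card_subtype_dvd (n : ℕ) : Nat.card {d // d ∣ n} = n.divisors.card := by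
  rcases eq_or_ne n 0 with rfl | hn
  · have : Infinite {d : ℕ // d ∣ 0} :=
      Infinite.of_injective (fun d => ⟨d, dvd_zero d⟩) fun _ _ h => congrArg Subtype.val h
    simp
  · rw [← Nat.card_eq_finsetCard]
    exact Nat.card_congr (Equiv.subtypeEquivRight fun d => by simp [hn])

theorem card_gl_orbits_eq_card_divisors_general (n r : ℕ) (hr : 1 ≤ r) :
    Nat.card {S : Set (Fin r → ZMod n) // ∃ v : Fin r → ZMod n, S = glOrbit n r v} =
      n.divisors.card := by
  let i : Fin r := ⟨0, hr⟩
  let f (d : {d // d ∣ n}) : {S : Set (Fin r → ZMod n) // ∃ v, S = glOrbit n r v} :=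
    ⟨glOrbit n r (Pi.single i (d : ZMod n)), _, rfl⟩
  have hf : Function.Bijective f := by
    constructor
    · intro d₁ d₂ h
      exact Subtype.ext (eq_of_glOrbit_single_eq d₁.2 d₂.2 (congrArg Subtype.val h))
    · rintro ⟨S, v, rfl⟩
      obtain ⟨d, hd, hv⟩ := exists_dvd_glOrbit_eq_single n i v
      exact ⟨⟨d, hd⟩, Subtype.ext hv.symm⟩
  rw [← Nat.card_subtype_dvd, Nat.card_eq_of_bijective f hf]

/-- For `n ≥ 1` and `r ≥ 1`, the natural action of `GL_r(ℤ/nℤ)` on `(ℤ/nℤ)^r` has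
exactly `d(n)` distinct orbits, where `d(n)` is the number of positive divisors of `n`. -/
theorem card_gl_orbits_eq_card_divisors (n r : ℕ) (hn : 1 ≤ n) (hr : 1 ≤ r) :
    Nat.card {S : Set (Fin r → ZMod n) // ∃ v : Fin r → ZMod n, S = glOrbit n r v} =
      n.divisors.card :=
  card_gl_orbits_eq_card_divisors_general n r hr
end

section
/- For every integer n ≥ 1, the sum of gcd(a − 1, n) over all integers a with 0 ≤ a < n and gcd(a, n) = 1 equals d(n)·φ(n), where d(n) is the number of positive divisors of n and φ is Euler's totient function. That is, Σ_{0 ≤ a < n, gcd(a,n)=1} gcd(a − 1, n) = d(n)·φ(n). -/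
/-!
Writing `gcd(a - 1, n) = ∑_{c ∣ gcd(a - 1, n)} φ(c)` and exchanging the sums, the left side becomes
`∑_{c ∣ n} φ(c) · #{a ∈ (ℤ/n)ˣ : a ≡ 1 mod c}`. The units `≡ 1 mod c` form the kernel of the
surjection `(ℤ/n)ˣ → (ℤ/c)ˣ`, which has `φ(n)/φ(c)` elements, so every divisor `c` contributes `φ(n)`.
-/

open Finset

theorem Int.gcd_natCast_eq_sum_totient (x : ℤ) {n : ℕ} (hn : n ≠ 0) :
    Int.gcd x n = ∑ c ∈ n.divisors with ((c : ℕ) : ℤ) ∣ x, c.totient := by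
  rw [← Nat.sum_totient (Int.gcd x n),
    ← Nat.divisors_filter_dvd_of_dvd hn (Int.ofNat_dvd.mp (Int.gcd_dvd_right x n))]
  refine sum_congr (filter_congr fun c hc => ?_) fun _ _ => rfl
  rw [Int.dvd_gcd_iff, and_iff_left (Int.ofNat_dvd.mpr (Nat.dvd_of_mem_divisors hc))]

theorem ZMod.sum_units_eq_sum_range_coprime {M : Type*} [AddCommMonoid M] (n : ℕ) [NeZero n]
    (f : ℕ → M) : ∑ u : (ZMod n)ˣ, f (u : ZMod n).val = ∑ a ∈ range n with a.Coprime n, f a := by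
  refine sum_bij' (fun u _ => (u : ZMod n).val)
    (fun a ha => unitOfCoprime a (mem_filter.mp ha).2) (fun u _ => ?_) (fun _ _ => mem_univ _)
    (fun u _ => ?_) (fun a ha => ?_) (fun _ _ => rfl)
  · exact mem_filter.mpr ⟨mem_range.mpr (val_lt _), val_coe_unit_coprime u⟩
  · exact Units.ext (natCast_zmod_val _)
  · exact val_cast_of_lt (mem_range.mp (mem_filter.mp ha).1)

theorem ZMod.unitsMap_eq_one_iff {c n : ℕ} [NeZero n] (hc : c ∣ n) (u : (ZMod n)ˣ) :
    unitsMap hc u = 1 ↔ (c : ℤ) ∣ ((u : ZMod n).val : ℤ) - 1 := by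
  rw [Units.ext_iff, unitsMap_val, Units.val_one, cast_eq_val, ← sub_eq_zero,
    ← intCast_zmod_eq_zero_iff_dvd]
  push_cast
  rfl

theorem ZMod.card_ker_unitsMap_mul_totient {c n : ℕ} [NeZero n] (hc : c ∣ n) :
    Nat.card (unitsMap hc).ker * c.totient = n.totient := by
  have : NeZero c := ⟨fun h => NeZero.ne n (Nat.eq_zero_of_zero_dvd (h ▸ hc))⟩
  have h := (unitsMap hc).ker.card_mul_index
  rwa [Subgroup.index_ker, MonoidHom.range_eq_top.mpr (unitsMap_surjective hc),
    Subgroup.card_top, Nat.card_eq_fintype_card (α := (ZMod c)ˣ),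
    Nat.card_eq_fintype_card (α := (ZMod n)ˣ), card_units_eq_totient,
    card_units_eq_totient] at h

theorem ZMod.card_units_dvd_val_sub_one_mul_totient {c n : ℕ} [NeZero n] (hc : c ∣ n) :
    #{u : (ZMod n)ˣ | (c : ℤ) ∣ ((u : ZMod n).val : ℤ) - 1} * c.totient = n.totient := by
  rw [← card_ker_unitsMap_mul_totient hc, ← Fintype.card_subtype, ← Nat.card_eq_fintype_card]
  congr 1
  exact Nat.card_congr <| Equiv.subtypeEquivRight fun u =>
    (unitsMap_eq_one_iff hc u).symm.trans (unitsMap hc).mem_ker.symm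

/-- For every `n ≥ 1`, `Σ_{0 ≤ a < n, gcd(a,n)=1} gcd(a - 1, n) = d(n)·φ(n)`, where
`d(n)` is the number of positive divisors of `n` and `φ` is Euler's totient function. -/
theorem sum_gcd_sub_one_eq_divisors_mul_totient (n : ℕ) (hn : 1 ≤ n) :
    ∑ a ∈ (Finset.range n).filter (fun a => Nat.gcd a n = 1),
        Int.gcd ((a : ℤ) - 1) n = n.divisors.card * n.totient := by
  have : NeZero n := ⟨by omega⟩
  calc ∑ a ∈ range n with Nat.gcd a n = 1, Int.gcd ((a : ℤ) - 1) n
      = ∑ a ∈ range n with a.Coprime n, ∑ c ∈ n.divisors with ((c : ℕ) : ℤ) ∣ (a : ℤ) - 1,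
          c.totient := sum_congr rfl fun a _ => Int.gcd_natCast_eq_sum_totient _ (NeZero.ne n)
    _ = ∑ u : (ZMod n)ˣ, ∑ c ∈ n.divisors with ((c : ℕ) : ℤ) ∣ ((u : ZMod n).val : ℤ) - 1,
          c.totient := (ZMod.sum_units_eq_sum_range_coprime n _).symm
    _ = ∑ c ∈ n.divisors, #{u : (ZMod n)ˣ | (c : ℤ) ∣ ((u : ZMod n).val : ℤ) - 1} * c.totient := by
        simp only [sum_filter, card_filter, sum_mul, ite_mul, one_mul, zero_mul]
        exact sum_comm
    _ = ∑ c ∈ n.divisors, n.totient :=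
        sum_congr rfl fun c hc =>
          ZMod.card_units_dvd_val_sub_one_mul_totient (Nat.dvd_of_mem_divisors hc)
    _ = n.divisors.card * n.totient := by rw [sum_const, smul_eq_mul]
end

section
/- Let n ≥ 1 and r ≥ 1 be integers. Then Σ_{A ∈ GL_r(ℤ/nℤ)} |{v ∈ (ℤ/nℤ)^r : A·v = v}| = d(n) · |GL_r(ℤ/nℤ)|, where the sum of the number of fixed vectors is taken over all invertible r×r matrices A over ℤ/nℤ. -/
/-!
By Burnside's lemma the sum is `|GL_r(ℤ/n)|` times the number of orbits of `GL_r(ℤ/n)`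
on `(ℤ/n)^r`. Every orbit contains a vector `d • e_i` with `d ∣ n`: a lift of the vector
to `ℤ^r` is, by the Smith normal form of the line it spans, a multiple of a vector of some
basis of `ℤ^r`, and every element of `ℤ/n` is a unit times a divisor of `n`. These orbits
are distinct because the additive order `n / d` of `d • e_i` is an invariant of the action.
-/

open Matrix

theorem addOrderOf_piSingle {ι : Type*} [DecidableEq ι] {M : ι → Type*}
    [(i : ι) → AddMonoid (M i)] (i : ι) (g : M i) : addOrderOf (Pi.single i g) = addOrderOf g :=
  addOrderOf_injective (AddMonoidHom.single M i) (Pi.single_injective i) g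

theorem Module.Basis.exists_smul_apply_eq {R M ι : Type*} [CommRing R] [IsDomain R]
    [IsPrincipalIdealRing R] [AddCommGroup M] [Module R M] [Finite ι]
    (b : Basis ι R M) (w : M) (i : ι) : ∃ (b' : Basis ι R M) (c : R), c • b' i = w := by
  obtain ⟨k, snf⟩ := (R ∙ w).smithNormalForm b
  have hk : k ≤ 1 := by
    simpa [finrank_eq_card_basis snf.bN] using finrank_span_le_card (R := R) ({w} : Set M)
  have hw : w ∈ R ∙ w := Submodule.mem_span_singleton_self w
  rcases Nat.le_one_iff_eq_zero_or_eq_one.mp hk with rfl | rfl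
  · have : (⟨w, hw⟩ : R ∙ w) = 0 := snf.bN.repr.injective (Subsingleton.elim _ _)
    exact ⟨b, 0, by simpa [eq_comm] using congrArg Subtype.val this⟩
  · classical
    refine ⟨snf.bM.reindex (Equiv.swap i (snf.f 0)), snf.bN.repr ⟨w, hw⟩ 0 * snf.a 0, ?_⟩
    have := congrArg Subtype.val (snf.bN.sum_repr ⟨w, hw⟩)
    simp only [Fin.sum_univ_one, Submodule.coe_smul, snf.snf] at this
    rw [reindex_apply, Equiv.symm_swap, Equiv.swap_apply_left, mul_smul, this]

namespace Matrix.GeneralLinearGroup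
variable {ι R : Type*} [Fintype ι] [DecidableEq ι] [CommRing R]

instance : DistribMulAction (GL ι R) (ι → R) := DistribMulAction.compHom _ toLin.toMonoidHom

theorem smul_eq_mulVec (A : GL ι R) (v : ι → R) : A • v = (A : Matrix ι ι R) *ᵥ v := rfl

theorem addOrderOf_smul (A : GL ι R) (v : ι → R) : addOrderOf (A • v) = addOrderOf v :=
  (DistribMulAction.toAddEquiv _ A).addOrderOf_eq v

theorem map_smul {S : Type*} [CommRing S] (f : R →+* S) (A : GL ι R) (v : ι → R) :
    map f A • (f ∘ v) = f ∘ (A • v) := by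
  ext i; simp [smul_eq_mulVec, RingHom.map_mulVec]

theorem scalar_smul (u : Rˣ) (v : ι → R) : scalar ι u • v = (u : R) • v := by
  simp [smul_eq_mulVec, coe_scalar]

theorem ofLinearEquiv_smul (e : (ι → R) ≃ₗ[R] (ι → R)) (v : ι → R) :
    toLin.symm ((LinearMap.GeneralLinearGroup.generalLinearEquiv R _).symm e) • v = e v := by
  rw [show ∀ A : GL ι R, A • v = (toLin A : (ι → R) →ₗ[R] ι → R) v from fun _ => rfl,
    MulEquiv.apply_symm_apply]
  rfl

theorem exists_smul_eq_single_divisor (n : ℕ) (v : ι → ZMod n) (i : ι) :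
    ∃ (A : GL ι (ZMod n)) (d : ℕ), d ∣ n ∧ A • v = Pi.single i (d : ZMod n) := by
  set w : ι → ℤ := fun j => (v j).cast
  obtain ⟨b, c, hc⟩ := (Pi.basisFun ℤ ι).exists_smul_apply_eq w i
  obtain ⟨d, hd, _, ⟨u, rfl⟩, hu⟩ := ZMod.eq_unit_mul_divisor (c : ZMod n)
  let B : GL ι ℤ :=
    toLin.symm ((LinearMap.GeneralLinearGroup.generalLinearEquiv ℤ _).symm b.equivFun)
  have hB : B • w = Pi.single i c := by
    rw [ofLinearEquiv_smul, ← hc, LinearEquiv.map_smul]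
    ext j; simp [Finsupp.single_apply, Pi.single_apply, eq_comm]
  have hw : Int.castRingHom (ZMod n) ∘ w = v := funext fun j => ZMod.intCast_zmod_cast (v j)
  refine ⟨scalar ι u⁻¹ * map (Int.castRingHom _) B, d, hd, ?_⟩
  rw [mul_smul, ← hw, map_smul, hB, scalar_smul]
  ext j; simp [Pi.single_apply, hu]

theorem card_orbitRel_quotient_zmod [Nonempty ι] (n : ℕ) [NeZero n] :
    Nat.card (MulAction.orbitRel.Quotient (GL ι (ZMod n)) (ι → ZMod n)) = n.divisors.card := by
  obtain ⟨i⟩ := ‹Nonempty ι›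
  have hord : ∀ d ∈ n.divisors,
      addOrderOf (Pi.single i (d : ZMod n) : ι → ZMod n) = n / d := fun d hd => by
    rw [addOrderOf_piSingle, ZMod.addOrderOf_coe d (NeZero.ne n),
      Nat.gcd_eq_right (Nat.dvd_of_mem_divisors hd)]
  rw [← Nat.card_eq_finsetCard]
  refine (Nat.card_eq_of_bijective
    (fun d : n.divisors => (⟦Pi.single i (d : ZMod n)⟧ : MulAction.orbitRel.Quotient _ _))
    ⟨?_, ?_⟩).symm
  · rintro ⟨d, hd⟩ ⟨e, he⟩ h
    obtain ⟨A, hA⟩ := Quotient.exact h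
    have := congrArg addOrderOf hA
    rw [addOrderOf_smul, hord d hd, hord e he] at this
    rw [Subtype.mk.injEq, ← Nat.div_div_self (Nat.dvd_of_mem_divisors hd) (NeZero.ne n), ← this,
      Nat.div_div_self (Nat.dvd_of_mem_divisors he) (NeZero.ne n)]
  · rintro ⟨v⟩
    obtain ⟨A, d, hd, hA⟩ := exists_smul_eq_single_divisor n v i
    exact ⟨⟨d, Nat.mem_divisors.2 ⟨hd, NeZero.ne n⟩⟩, Quotient.sound ⟨A, hA⟩⟩

end Matrix.GeneralLinearGroup

/-- For `n ≥ 1` and `r ≥ 1`, the sum over all `A ∈ GL_r(ℤ/nℤ)` of the number of vectors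
`v ∈ (ℤ/nℤ)^r` fixed by `A` (i.e. `A·v = v`) equals `d(n) · |GL_r(ℤ/nℤ)|`, where `d(n)`
is the number of positive divisors of `n`. -/
theorem sum_card_fixed_vectors_eq_divisors_mul_card_GL
    (n r : ℕ) [NeZero n] (hr : 1 ≤ r) :
    ∑ A : GL (Fin r) (ZMod n),
        Nat.card {v : Fin r → ZMod n |
          (A : Matrix (Fin r) (Fin r) (ZMod n)).mulVec v = v} =
      n.divisors.card * Nat.card (GL (Fin r) (ZMod n)) := by
  classical
  have : Nonempty (Fin r) := ⟨⟨0, hr⟩⟩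
  calc ∑ A : GL (Fin r) (ZMod n), Nat.card {v : Fin r → ZMod n | (A : Matrix _ _ _) *ᵥ v = v}
      = ∑ A, Fintype.card (MulAction.fixedBy (Fin r → ZMod n) A) := by
        simp only [Nat.card_eq_fintype_card]; rfl
    _ = Fintype.card (MulAction.orbitRel.Quotient (GL (Fin r) (ZMod n)) (Fin r → ZMod n)) *
          Fintype.card (GL (Fin r) (ZMod n)) :=
        MulAction.sum_card_fixedBy_eq_card_orbits_mul_card_group _ _
    _ = n.divisors.card * Nat.card (GL (Fin r) (ZMod n)) := by
        rw [← Nat.card_eq_fintype_card, ← Nat.card_eq_fintype_card,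
          Matrix.GeneralLinearGroup.card_orbitRel_quotient_zmod]
end
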